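/- Let X be a T1 regular space. If the hyperspace F_2(X) of nonempty subsets of X with at most two points, equipped with the Vietoris topology, is perfect (every closed subset is a G_δ-set), then X has a G_δ-diagonal. -/

import Mathlib

open Set TopologicalSpace

universe u v

/-- The Fell topology on the collection of all subsets of `X`, generated by the subbase
consisting of the sets `U⁻ = {H | H ∩ U ≠ ∅}` for `U` open and
`(Kᶜ)⁺ = {H | H ⊆ Kᶜ}` for `K` compact. -/
def fellTopology (X : Type u) [TopologicalSpace X] : TopologicalSpace (Set X) :=
  TopologicalSpace.generateFrom
    ({S | ∃ U : Set X, IsOpen U ∧ S = {H : Set X | (H ∩ U).Nonempty}} ∪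
     {S | ∃ K : Set X, IsCompact K ∧ S = {H : Set X | H ⊆ Kᶜ}})

/-- The Vietoris topology on the collection of all subsets of `X`, generated by the subbase
consisting of the sets `U⁺ = {H | H ⊆ U}` and `U⁻ = {H | H ∩ U ≠ ∅}` for `U` open. -/
def vietorisTopology (X : Type u) [TopologicalSpace X] : TopologicalSpace (Set X) :=
  TopologicalSpace.generateFrom
    ({S | ∃ U : Set X, IsOpen U ∧ S = {H : Set X | H ⊆ U}} ∪
     {S | ∃ U : Set X, IsOpen U ∧ S = {H : Set X | (H ∩ U).Nonempty}})

/-- A collection `S` of subsets of `X`, viewed as a hyperspace with the Fell topology. -/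
def FellHyper (X : Type u) [TopologicalSpace X] (S : Set (Set X)) : Type u :=
  {A : Set X // A ∈ S}

/-- A collection `S` of subsets of `X`, viewed as a hyperspace with the Vietoris topology. -/
def VietorisHyper (X : Type u) [TopologicalSpace X] (S : Set (Set X)) : Type u :=
  {A : Set X // A ∈ S}

instance FellHyper.instTopologicalSpace (X : Type u) [TopologicalSpace X] (S : Set (Set X)) :
    TopologicalSpace (FellHyper X S) :=
  TopologicalSpace.induced (Subtype.val : {A : Set X // A ∈ S} → Set X) (fellTopology X)

instance VietorisHyper.instTopologicalSpace (X : Type u) [TopologicalSpace X] (S : Set (Set X)) :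
    TopologicalSpace (VietorisHyper X S) :=
  TopologicalSpace.induced (Subtype.val : {A : Set X // A ∈ S} → Set X) (vietorisTopology X)

/-- The underlying subset of `X` of a point of a Fell hyperspace. -/
def FellHyper.carrier {X : Type u} [TopologicalSpace X] {S : Set (Set X)}
    (A : FellHyper X S) : Set X :=
  Subtype.val A

/-- The underlying subset of `X` of a point of a Vietoris hyperspace. -/
def VietorisHyper.carrier {X : Type u} [TopologicalSpace X] {S : Set (Set X)}
    (A : VietorisHyper X S) : Set X :=
  Subtype.val A

/-- `CL(X)`: the nonempty closed subsets of `X`. -/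
def CL (X : Type u) [TopologicalSpace X] : Set (Set X) := {A | A.Nonempty ∧ IsClosed A}

/-- `𝒦(X)`: the nonempty compact subsets of `X`. -/
def Kcal (X : Type u) [TopologicalSpace X] : Set (Set X) := {A | A.Nonempty ∧ IsCompact A}

/-- `ℱ(X)`: the nonempty finite subsets of `X`. -/
def Fcal (X : Type u) : Set (Set X) := {A | A.Nonempty ∧ A.Finite}

/-- `ℱₙ(X)`: the nonempty subsets of `X` with at most `n` points. -/
def Fn (X : Type u) (n : ℕ) : Set (Set X) := {A | A.Nonempty ∧ A.encard ≤ n}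

/-- A space is a `D₁`-space if every nonempty closed subset has a countable
neighborhood base. -/
def IsD1Space (Y : Type v) [TopologicalSpace Y] : Prop :=
  ∀ F : Set Y, F.Nonempty → IsClosed F →
    ∃ B : ℕ → Set Y, (∀ n, IsOpen (B n) ∧ F ⊆ B n) ∧
      ∀ V : Set Y, IsOpen V → F ⊆ V → ∃ n, B n ⊆ V

/-- A space is a `D₀`-space if every nonempty compact subset has a countable
neighborhood base. -/
def IsD0Space (Y : Type v) [TopologicalSpace Y] : Prop :=
  ∀ F : Set Y, F.Nonempty → IsCompact F →
    ∃ B : ℕ → Set Y, (∀ n, IsOpen (B n) ∧ F ⊆ B n) ∧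
      ∀ V : Set Y, IsOpen V → F ⊆ V → ∃ n, B n ⊆ V

/-- A space has a `G_δ`-diagonal if the diagonal is a `G_δ`-set in `X × X`. -/
def HasGdeltaDiagonal (X : Type u) [TopologicalSpace X] : Prop :=
  ∃ U : ℕ → Set (X × X), (∀ n, IsOpen (U n)) ∧ (⋂ n, U n) = {p : X × X | p.1 = p.2}

/-- A space is perfect if every closed subset is a `G_δ`-set. -/
def IsPerfectSpace (Y : Type v) [TopologicalSpace Y] : Prop :=
  ∀ F : Set Y, IsClosed F → ∃ U : ℕ → Set Y, (∀ n, IsOpen (U n)) ∧ F = ⋂ n, U n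

/-- A space has the compact-`G_δ` property if every compact subset is a `G_δ`-set. -/
def CompactGDeltaProperty (Y : Type v) [TopologicalSpace Y] : Prop :=
  ∀ K : Set Y, IsCompact K → ∃ U : ℕ → Set Y, (∀ n, IsOpen (U n)) ∧ K = ⋂ n, U n

/-- `γ`-space. -/
def IsGammaSpace (Y : Type v) [TopologicalSpace Y] : Prop :=
  ∃ g : ℕ → Y → Set Y,
    (∀ n y, IsOpen (g n y) ∧ y ∈ g n y) ∧
    (∀ y, ∀ V : Set Y, IsOpen V → y ∈ V → ∃ n, g n y ⊆ V) ∧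
    (∀ n y, ∃ m, ∀ z ∈ g m y, g m z ⊆ g n y)

/-- A space has a `G_δ*`-diagonal if there is a sequence `𝒰 n` of open covers such that
`{x} = ⋂ n, closure (st(x, 𝒰 n))` for every `x`. -/
def HasGdeltaStarDiagonal (X : Type u) [TopologicalSpace X] : Prop :=
  ∃ 𝒰 : ℕ → Set (Set X),
    (∀ n, ∀ U ∈ 𝒰 n, IsOpen U) ∧ (∀ n, ⋃₀ 𝒰 n = univ) ∧
    ∀ x : X, (⋂ n, closure (⋃₀ {U ∈ 𝒰 n | x ∈ U})) = {x}

/-! The map `(x, y) ↦ {x, y}` from `X × X` to `ℱ₂(X)` is continuous, and the singletons form a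
closed subset of `ℱ₂(X)` as soon as `X` is Hausdorff (which a regular `T₁` space is). The diagonal
is the preimage of that closed set, which is a `G_δ` in the perfect space `ℱ₂(X)`, and preimages of
`G_δ`-sets under continuous maps are `G_δ`. -/

open Topology

attribute [local instance] TopologicalSpace.vietoris

theorem vietorisTopology_eq_vietoris (X : Type u) [TopologicalSpace X] :
    vietorisTopology X = TopologicalSpace.vietoris X := by
  unfold vietorisTopology TopologicalSpace.vietoris
  congr 1
  ext S
  simp only [mem_union, mem_ofPred_eq, mem_image, powerset, eq_comm (a := S)]

namespace VietorisHyper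

variable {X : Type u} [TopologicalSpace X]

theorem isInducing_carrier (S : Set (Set X)) :
    IsInducing (carrier : VietorisHyper X S → Set X) :=
  ⟨by rw [← vietorisTopology_eq_vietoris]; rfl⟩

theorem isClosed_carrier_preimage_range_singleton [T2Space X] (S : Set (Set X)) :
    IsClosed (carrier ⁻¹' range ({·} : X → Set X) : Set (VietorisHyper X S)) :=
  TopologicalSpace.vietoris.isClosedEmbedding_singleton.isClosed_range.preimage
    (isInducing_carrier S).continuous

end VietorisHyper

theorem pair_mem_Fn_two {X : Type u} (x y : X) : ({x, y} : Set X) ∈ Fn X 2 :=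
  ⟨⟨x, mem_insert x _⟩, (encard_insert_le _ _).trans (by rw [encard_singleton]; rfl)⟩

def pairMap (X : Type u) [TopologicalSpace X] (p : X × X) : VietorisHyper X (Fn X 2) :=
  ⟨{p.1, p.2}, pair_mem_Fn_two p.1 p.2⟩

theorem continuous_pairMap (X : Type u) [TopologicalSpace X] : Continuous (pairMap X) := by
  refine (VietorisHyper.isInducing_carrier _).continuous_iff.mpr ?_
  have hval : VietorisHyper.carrier ∘ pairMap X = fun p : X × X => {p.1} ∪ {p.2} := by
    ext p : 1
    exact insert_eq p.1 {p.2}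
  rw [hval]
  exact TopologicalSpace.vietoris.continuous_union.comp
    (TopologicalSpace.vietoris.continuous_singleton.prodMap
      TopologicalSpace.vietoris.continuous_singleton)

theorem pairMap_preimage_carrier_preimage_range_singleton (X : Type u) [TopologicalSpace X] :
    pairMap X ⁻¹' (VietorisHyper.carrier ⁻¹' range ({·} : X → Set X)) =
      {p : X × X | p.1 = p.2} := by
  ext ⟨a, b⟩
  constructor
  · rintro ⟨z, hz⟩
    replace hz : ({z} : Set X) = {a, b} := hz
    have ha : a ∈ ({z} : Set X) := hz ▸ mem_insert a {b}
    have hb : b ∈ ({z} : Set X) := hz ▸ mem_insert_of_mem a rfl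
    exact ha.trans hb.symm
  · rintro (rfl : a = b)
    exact ⟨a, (pair_eq_singleton a).symm⟩

/-- If `ℱ₂(X)` with the Vietoris topology is perfect, then `X` has a
`G_δ`-diagonal. -/
theorem statement3 (X : Type u) [TopologicalSpace X] [T1Space X] [RegularSpace X]
    (h : IsPerfectSpace (VietorisHyper X (Fn X 2))) :
    HasGdeltaDiagonal X := by
  obtain ⟨G, hG, hCG⟩ := h _ (VietorisHyper.isClosed_carrier_preimage_range_singleton (Fn X 2))
  refine ⟨fun n => pairMap X ⁻¹' G n, fun n => (hG n).preimage (continuous_pairMap X), ?_⟩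
  rw [← preimage_iInter, ← hCG, pairMap_preimage_carrier_preimage_range_singleton]
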